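/- (Relations satisfied by the recursive basis, Lemma 4.3.) For every t ≥ 0, the set B_[2t] is closed under the exchange map (−)^e, and for every b ∈ B_[2t] the following identities hold in R: (i) Q1(b) = Q1(b^e); (ii) Q1(Q1(b)^e) = b + b^e; (iii) P(Q1(b)^e) = Q1(b); (iv) P(b) = 0 = P(b^e); (v) Q1(Q1(b·x_{2t+1})^e) = Q1(b·x_{2t+1}); (vi) P(Q1(b·x_{2t+1})) = 0; (vii) P(Q1(b·x_{2t+1})^e) = 0. -/

import Mathlib

/-!
The exterior model `R = Λ_{F₂}(t₁, t₂, …) ⊗ Λ_{F₂}(x₁, x₂, …)`, realized as the free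
`F₂`-vector space on basis monomials `t_I x_J` indexed by pairs of finite subsets
`I, J ⊆ {1, 2, …}` (modelled by `Finset ℕ+`), with the product
`t_I x_J · t_{I'} x_{J'} = t_{I∪I'} x_{J∪J'}` when `I ∩ I' = ∅ = J ∩ J'`, and `0` otherwise;
the operators `Q₁(t_I x_J) = Σ_{j∈J} t_j t_I x_{J∖j}` and
`P(t_I x_J) = Σ_{K⊆J, |K|=2} t_K t_I x_{J∖K}`; and the exchange map `(t_I x_J)ᵉ = t_J x_I`.
-/

noncomputable section

namespace Tmf

abbrev F : Type := ZMod 2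

/-- The underlying `F₂`-vector space of `R`, free on pairs of finite subsets of `ℕ+`. -/
abbrev R : Type := (Finset ℕ+ × Finset ℕ+) →₀ F

/-- The basis monomial `t_I x_J`. -/
def tx (I J : Finset ℕ+) : R := Finsupp.single (I, J) 1

/-- Product of two basis monomials. -/
def mulVal (a b : Finset ℕ+ × Finset ℕ+) : R :=
  if Disjoint a.1 b.1 ∧ Disjoint a.2 b.2 then tx (a.1 ∪ b.1) (a.2 ∪ b.2) else 0

/-- The (bilinear) multiplication of `R`. -/
def mulR : R →ₗ[F] R →ₗ[F] R :=
  Finsupp.lsum F fun a => LinearMap.id.smulRight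
    (Finsupp.lsum F fun b => LinearMap.id.smulRight (mulVal a b))

/-- `Q₁` on a basis monomial: `Q₁(t_I x_J) = Σ_{j∈J} t_j t_I x_{J∖j}`. -/
def Q1val (a : Finset ℕ+ × Finset ℕ+) : R :=
  ∑ j ∈ a.2, if j ∈ a.1 then 0 else tx (insert j a.1) (a.2.erase j)

/-- The operator `Q₁ : R → R`. -/
def Q1R : R →ₗ[F] R := Finsupp.lsum F fun a => LinearMap.id.smulRight (Q1val a)

/-- `P` on a basis monomial: `P(t_I x_J) = Σ_{K⊆J, |K|=2} t_K t_I x_{J∖K}`. -/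
def PvalR (a : Finset ℕ+ × Finset ℕ+) : R :=
  ∑ p ∈ (a.2 ×ˢ a.2).filter fun p => p.1 < p.2,
    if p.1 ∈ a.1 ∨ p.2 ∈ a.1 then 0
    else tx (insert p.1 (insert p.2 a.1)) ((a.2.erase p.1).erase p.2)

/-- The operator `P : R → R` (the `d₂`-differential of the length spectral sequence). -/
def PR : R →ₗ[F] R := Finsupp.lsum F fun a => LinearMap.id.smulRight (PvalR a)

/-- The exchange map `(t_I x_J)ᵉ = t_J x_I`. -/
def exch : R →ₗ[F] R := Finsupp.lsum F fun a => LinearMap.id.smulRight (tx a.2 a.1)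

/-- `x_n` (with `n : ℕ` positive, coerced into `ℕ+`). -/
def xg (n : ℕ) : R := tx ∅ {n.toPNat'}

/-- `t_n` (with `n : ℕ` positive, coerced into `ℕ+`). -/
def tg (n : ℕ) : R := tx {n.toPNat'} ∅

/-- `M_J ⊆ R`: the span of `{t_I x_{J∖I} : I ⊆ J}`. -/
def MJ (J : Finset ℕ+) : Submodule F R :=
  Submodule.span F {m | ∃ I ⊆ J, m = tx I (J \ I)}

/-- The sets `B_{[2t]}` of the recursive construction (Definition 4.2). -/
def B2 : ℕ → Set R
  | 0 => {tx ∅ ∅}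
  | t + 1 =>
      (fun b => mulR (Q1R (mulR b (xg (2 * t + 1)))) (xg (2 * t + 2))) '' B2 t ∪
      (fun b => mulR (exch (Q1R (mulR b (xg (2 * t + 1))))) (tg (2 * t + 2))) '' B2 t

/-- The sets `B_{[n]}` (Definition 4.2): `B_{[0]} = {1}`,
`B_{[2t+1]} = Q₁(B_{[2t]}·x_{2t+1}) ∪ (Q₁(B_{[2t]}·x_{2t+1}))ᵉ`,
`B_{[2t+2]} = Q₁(B_{[2t]}·x_{2t+1})·x_{2t+2} ∪ (Q₁(B_{[2t]}·x_{2t+1}))ᵉ·t_{2t+2}`. -/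
def BB (n : ℕ) : Set R :=
  if Even n then B2 (n / 2)
  else
    (fun b => Q1R (mulR b (xg n))) '' B2 (n / 2) ∪
    (fun b => exch (Q1R (mulR b (xg n)))) '' B2 (n / 2)

/-- `[n] = {1, …, n}` as a `Finset ℕ+`. -/
def rng (n : ℕ) : Finset ℕ+ := (Finset.range n).image fun i => (i + 1).toPNat'

/-- `B_J` for a finite `J ⊆ ℕ+`: the image of `B_{[|J|]}` under the relabeling
`t_i ↦ t_{φ(i)}`, `x_i ↦ x_{φ(i)}`, where `φ : [|J|] → J` is the order-preserving
bijection (`phiJ J`, extended by the identity to all of `ℕ+`). -/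
def phiJ (J : Finset ℕ+) (m : ℕ+) : ℕ+ :=
  if h : (m : ℕ) - 1 < J.card then (J.orderIsoOfFin rfl ⟨(m : ℕ) - 1, h⟩ : ℕ+) else m

/-- `B_J`: the relabeled copy of `B_{[|J|]}` inside `M_J`. -/
def BJ (J : Finset ℕ+) : Set R :=
  (Finsupp.lsum F fun a => LinearMap.id.smulRight
      (tx (a.1.image (phiJ J)) (a.2.image (phiJ J))) : R →ₗ[F] R) '' BB J.card

/-!
`Q₁` and `P` are `D_1` and `D_2` for the operators `D_r = xToT r`,
`D_r(t_I x_J) = Σ_{K ⊆ J, |K| = r} t_K t_I x_{J∖K}`, and `D_0 = id`. They obey the Leibniz-type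
rules `D_{r+1}(u x_k) = D_{r+1}(u) x_k + D_r(u) t_k` and `D_r(u t_k) = D_r(u) t_k`, while the
exchange map turns right multiplication by `x_k` into right multiplication by `t_k`.
Since every monomial is `t_I` times a product of `x_k`'s, these rules give `Q₁² = 0` and
`PQ₁ = Q₁P` on all of `R`. With them, relations (i)–(iv) for `b` yield (v)–(vii) for `b`, and
those in turn give (i)–(iv) for `Q₁(b x_{2t+1}) x_{2t+2}`. Relations (i)–(iv) are invariant under
the exchange map, which carries this half of `B_[2t+2]` onto the other one.
-/

local notation "𝐱" k:max => tx ∅ {k}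
local notation "𝐭" k:max => tx {k} ∅
local infixl:70 " ⬝ " => mulR

lemma lsum_tx {M : Type} [AddCommMonoid M] [Module F M] (g : Finset ℕ+ × Finset ℕ+ → M)
    (I J : Finset ℕ+) :
    Finsupp.lsum F (fun a => (LinearMap.id : F →ₗ[F] F).smulRight (g a)) (tx I J) = g (I, J) := by
  simp [tx]

lemma exch_tx (I J : Finset ℕ+) : exch (tx I J) = tx J I := lsum_tx _ I J

lemma Q1R_tx (I J : Finset ℕ+) : Q1R (tx I J) = Q1val (I, J) := lsum_tx _ I J

lemma PR_tx (I J : Finset ℕ+) : PR (tx I J) = PvalR (I, J) := lsum_tx _ I J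

lemma tx_mul_tx (I J I' J' : Finset ℕ+) : tx I J ⬝ tx I' J' = mulVal (I, J) (I', J') := by
  rw [mulR, lsum_tx, lsum_tx]

lemma tx_mul_x (I J : Finset ℕ+) (k : ℕ+) :
    tx I J ⬝ 𝐱 k = if k ∈ J then 0 else tx I (insert k J) := by
  by_cases hk : k ∈ J <;> simp [tx_mul_tx, mulVal, hk]

lemma tx_mul_t (I J : Finset ℕ+) (k : ℕ+) :
    tx I J ⬝ 𝐭 k = if k ∈ I then 0 else tx (insert k I) J := by
  by_cases hk : k ∈ I <;> simp [tx_mul_tx, mulVal, hk]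

lemma linearMap_ext_tx {M : Type} [AddCommMonoid M] [Module F M] {f g : R →ₗ[F] M}
    (h : ∀ I J, f (tx I J) = g (tx I J)) : f = g :=
  Finsupp.lhom_ext' fun a => LinearMap.ext_ring (h a.1 a.2)

lemma apply_eq_of_tx {M : Type} [AddCommMonoid M] [Module F M] {f g : R →ₗ[F] M}
    (h : ∀ I J, f (tx I J) = g (tx I J)) (u : R) : f u = g u := by
  rw [linearMap_ext_tx h]

lemma mul_x_mul_x (u : R) (k : ℕ+) : u ⬝ 𝐱 k ⬝ 𝐱 k = 0 := by
  refine apply_eq_of_tx (f := (mulR.flip (𝐱 k)) ∘ₗ mulR.flip (𝐱 k)) (g := 0) (fun I J => ?_) u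
  by_cases hk : k ∈ J <;> simp [tx_mul_x, hk]

lemma mul_t_mul_t (u : R) (k : ℕ+) : u ⬝ 𝐭 k ⬝ 𝐭 k = 0 := by
  refine apply_eq_of_tx (f := (mulR.flip (𝐭 k)) ∘ₗ mulR.flip (𝐭 k)) (g := 0) (fun I J => ?_) u
  by_cases hk : k ∈ I <;> simp [tx_mul_t, hk]

lemma mul_t_mul_x (u : R) (k m : ℕ+) : u ⬝ 𝐭 k ⬝ 𝐱 m = u ⬝ 𝐱 m ⬝ 𝐭 k := by
  refine apply_eq_of_tx (f := (mulR.flip (𝐱 m)) ∘ₗ mulR.flip (𝐭 k))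
    (g := (mulR.flip (𝐭 k)) ∘ₗ mulR.flip (𝐱 m)) (fun I J => ?_) u
  by_cases hk : k ∈ I <;> by_cases hm : m ∈ J <;> simp [tx_mul_t, tx_mul_x, hk, hm]

lemma exch_exch (u : R) : exch (exch u) = u := by
  refine apply_eq_of_tx (f := exch ∘ₗ exch) (g := LinearMap.id) (fun I J => ?_) u
  simp [exch_tx]

lemma exch_mul_x (u : R) (k : ℕ+) : exch (u ⬝ 𝐱 k) = exch u ⬝ 𝐭 k := by
  refine apply_eq_of_tx (f := exch ∘ₗ mulR.flip (𝐱 k))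
    (g := (mulR.flip (𝐭 k)) ∘ₗ exch) (fun I J => ?_) u
  by_cases hk : k ∈ J <;> simp [tx_mul_t, tx_mul_x, exch_tx, hk]

lemma exch_mul_t (u : R) (k : ℕ+) : exch (u ⬝ 𝐭 k) = exch u ⬝ 𝐱 k := by
  simpa [exch_exch] using congrArg exch (exch_mul_x (exch u) k).symm

lemma tx_induction {p : R → Prop} (base : ∀ I, p (tx I ∅))
    (step : ∀ u k, p u → p (u ⬝ 𝐱 k)) (I J : Finset ℕ+) : p (tx I J) := by
  induction J using Finset.induction_on with
  | empty => exact base I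
  | insert k J hk ih => simpa [tx_mul_x, hk] using step _ k ih

def xToT (r : ℕ) : R →ₗ[F] R :=
  Finsupp.lsum F fun a => LinearMap.id.smulRight
    (∑ K ∈ a.2.powersetCard r, if Disjoint K a.1 then tx (K ∪ a.1) (a.2 \ K) else 0)

lemma xToT_tx (r : ℕ) (I J : Finset ℕ+) :
    xToT r (tx I J) =
      ∑ K ∈ J.powersetCard r, if Disjoint K I then tx (K ∪ I) (J \ K) else 0 :=
  lsum_tx _ I J

lemma xToT_zero : xToT 0 = LinearMap.id :=
  linearMap_ext_tx fun I J => by simp [xToT_tx]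

lemma Q1R_eq_xToT_one : Q1R = xToT 1 := by
  refine linearMap_ext_tx fun I J => ?_
  rw [Q1R_tx, xToT_tx, Finset.powersetCard_one, Finset.sum_map]
  refine Finset.sum_congr rfl fun j _ => ?_
  simp [Finset.sdiff_singleton_eq_erase, ite_not]

lemma PR_eq_xToT_two : PR = xToT 2 := by
  refine linearMap_ext_tx fun I J => ?_
  rw [PR_tx, xToT_tx]
  refine Finset.sum_bij (fun p _ => {p.1, p.2}) ?_ ?_ ?_ ?_
  · rintro ⟨a, b⟩ h
    simp only [Finset.mem_filter, Finset.mem_product] at h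
    simp [Finset.mem_powersetCard, Finset.insert_subset_iff, Finset.card_pair h.2.ne, h.1.1, h.1.2]
  · rintro ⟨a, b⟩ h ⟨c, d⟩ h' e
    simp only [Finset.mem_filter] at h h'
    have ha : a ∈ ({c, d} : Finset ℕ+) := e ▸ Finset.mem_insert_self a {b}
    have hb : b ∈ ({c, d} : Finset ℕ+) := e ▸ Finset.mem_insert_of_mem (Finset.mem_singleton_self b)
    simp only [Finset.mem_insert, Finset.mem_singleton] at ha hb
    grind
  · intro K hK
    obtain ⟨hKJ, hK2⟩ := Finset.mem_powersetCard.1 hK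
    obtain ⟨a, b, hab, rfl⟩ := Finset.card_eq_two.1 hK2
    rw [Finset.insert_subset_iff, Finset.singleton_subset_iff] at hKJ
    rcases hab.lt_or_gt with h | h
    · exact ⟨(a, b), by simp [h, hKJ], rfl⟩
    · exact ⟨(b, a), by simp [h, hKJ], Finset.pair_comm _ _⟩
  · rintro ⟨a, b⟩ h
    simp [Finset.sdiff_insert, Finset.sdiff_singleton_eq_erase, Finset.erase_right_comm, ← not_or,
      ite_not]

lemma xToT_mul_t (r : ℕ) (u : R) (k : ℕ+) : xToT r (u ⬝ 𝐭 k) = xToT r u ⬝ 𝐭 k := by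
  refine apply_eq_of_tx (f := xToT r ∘ₗ mulR.flip (𝐭 k))
    (g := mulR.flip (𝐭 k) ∘ₗ xToT r) (fun I J => ?_) u
  simp only [LinearMap.comp_apply, LinearMap.flip_apply, tx_mul_t, xToT_tx, map_sum]
  by_cases hk : k ∈ I
  · simp only [hk, if_true, map_zero]
    refine (Finset.sum_eq_zero fun K _ => ?_).symm
    split_ifs <;> simp [tx_mul_t, hk]
  · simp only [hk, if_false, xToT_tx]
    refine Finset.sum_congr rfl fun K _ => ?_
    by_cases hkK : k ∈ K <;> by_cases hKI : Disjoint K I <;>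
      simp [hk, hkK, hKI, tx_mul_t, Finset.disjoint_insert_right, Finset.union_insert]

lemma xToT_succ_tx_mul_x (r : ℕ) (I J : Finset ℕ+) {k : ℕ+} (hk : k ∉ J) :
    xToT (r + 1) (tx I J ⬝ 𝐱 k) = xToT (r + 1) (tx I J) ⬝ 𝐱 k + xToT r (tx I J) ⬝ 𝐭 k := by
  have hkK : ∀ s, ∀ K ∈ J.powersetCard s, k ∉ K := fun s K hK h =>
    hk (Finset.mem_powersetCard.1 hK |>.1 h)
  rw [tx_mul_x, if_neg hk, xToT_tx, Finset.powersetCard_succ_insert hk, Finset.sum_union,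
    Finset.sum_image]
  · simp only [xToT_tx, map_sum, LinearMap.sum_apply]
    congr 1
    · refine Finset.sum_congr rfl fun K hK => ?_
      by_cases hKI : Disjoint K I <;>
        simp [hKI, hkK _ K hK, hk, tx_mul_x, Finset.insert_sdiff_of_notMem]
    · refine Finset.sum_congr rfl fun K hK => ?_
      by_cases hKI : Disjoint K I <;> by_cases hkI : k ∈ I <;>
        simp [hKI, hkI, hkK r K hK, hk, tx_mul_t, Finset.disjoint_insert_left,
          Finset.insert_sdiff_insert, Finset.sdiff_insert_of_notMem, Finset.insert_union]
  · exact fun K hK L hL e => by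
      simpa [hkK r K hK, hkK r L hL] using congrArg (Finset.erase · k) e
  · refine Finset.disjoint_left.2 fun K hK hK' => ?_
    obtain ⟨L, -, rfl⟩ := Finset.mem_image.1 hK'
    exact hk (Finset.mem_powersetCard.1 hK |>.1 (Finset.mem_insert_self k L))

lemma xToT_succ_mul_x (r : ℕ) (u : R) (k : ℕ+) :
    xToT (r + 1) (u ⬝ 𝐱 k) = xToT (r + 1) u ⬝ 𝐱 k + xToT r u ⬝ 𝐭 k := by
  refine apply_eq_of_tx (f := xToT (r + 1) ∘ₗ mulR.flip (𝐱 k))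
    (g := mulR.flip (𝐱 k) ∘ₗ xToT (r + 1) + mulR.flip (𝐭 k) ∘ₗ xToT r) (fun I J => ?_) u
  simp only [LinearMap.comp_apply, LinearMap.flip_apply, LinearMap.add_apply]
  by_cases hk : k ∈ J
  · -- `t_I x_J = v x_k` with `v = t_I x_{J∖k}`; both sides vanish since `x_k² = t_k² = 0` and
    -- `t_k x_k = x_k t_k` in characteristic 2
    have hk' : k ∉ J.erase k := Finset.notMem_erase k J
    have hv : tx I J = tx I (J.erase k) ⬝ 𝐱 k := by simp [tx_mul_x, Finset.insert_erase hk]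
    have hr : xToT r (tx I (J.erase k) ⬝ 𝐱 k) ⬝ 𝐭 k = xToT r (tx I (J.erase k)) ⬝ 𝐱 k ⬝ 𝐭 k := by
      cases r with
      | zero => simp [xToT_zero]
      | succ s => simp [xToT_succ_tx_mul_x _ _ _ hk', mul_t_mul_t]
    rw [hv, mul_x_mul_x, map_zero, hr, xToT_succ_tx_mul_x _ _ _ hk']
    simp only [map_add, LinearMap.add_apply, mul_x_mul_x, mul_t_mul_x, zero_add]
    exact (ZModModule.add_self _).symm
  · exact xToT_succ_tx_mul_x r I J hk

lemma Q1R_mul_x (u : R) (k : ℕ+) : Q1R (u ⬝ 𝐱 k) = Q1R u ⬝ 𝐱 k + u ⬝ 𝐭 k := by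
  simpa [Q1R_eq_xToT_one, xToT_zero] using xToT_succ_mul_x 0 u k

lemma Q1R_mul_t (u : R) (k : ℕ+) : Q1R (u ⬝ 𝐭 k) = Q1R u ⬝ 𝐭 k := by
  rw [Q1R_eq_xToT_one, xToT_mul_t]

lemma PR_mul_x (u : R) (k : ℕ+) : PR (u ⬝ 𝐱 k) = PR u ⬝ 𝐱 k + Q1R u ⬝ 𝐭 k := by
  rw [PR_eq_xToT_two, Q1R_eq_xToT_one, xToT_succ_mul_x]

lemma PR_mul_t (u : R) (k : ℕ+) : PR (u ⬝ 𝐭 k) = PR u ⬝ 𝐭 k := by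
  rw [PR_eq_xToT_two, xToT_mul_t]

lemma xToT_succ_tx_empty (r : ℕ) (I : Finset ℕ+) : xToT (r + 1) (tx I ∅) = 0 := by
  rw [xToT_tx, Finset.powersetCard_eq_empty.2 (by simp), Finset.sum_empty]

lemma Q1R_Q1R (u : R) : Q1R (Q1R u) = 0 := by
  refine apply_eq_of_tx (f := Q1R ∘ₗ Q1R) (g := 0) (fun I J => ?_) u
  refine tx_induction (p := fun v => Q1R (Q1R v) = 0) (fun I => ?_) (fun v k hv => ?_) I J
  · simp [Q1R_eq_xToT_one, xToT_succ_tx_empty]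
  · simp only [Q1R_mul_x, Q1R_mul_t, map_add, hv, map_zero, LinearMap.zero_apply, zero_add,
      ZModModule.add_self]

lemma PR_Q1R (u : R) : PR (Q1R u) = Q1R (PR u) := by
  refine apply_eq_of_tx (f := PR ∘ₗ Q1R) (g := Q1R ∘ₗ PR) (fun I J => ?_) u
  refine tx_induction (p := fun v => PR (Q1R v) = Q1R (PR v)) (fun I => ?_) (fun v k hv => ?_) I J
  · simp [Q1R_eq_xToT_one, PR_eq_xToT_two, xToT_succ_tx_empty]
  · simp only [Q1R_mul_x, Q1R_mul_t, PR_mul_x, PR_mul_t, map_add, hv, Q1R_Q1R, map_zero,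
      LinearMap.zero_apply, add_zero]

structure BasisRelations (b : R) : Prop where
  Q1R_exch : Q1R b = Q1R (exch b)
  Q1R_exch_Q1R : Q1R (exch (Q1R b)) = b + exch b
  PR_exch_Q1R : PR (exch (Q1R b)) = Q1R b
  PR_eq_zero : PR b = 0
  PR_exch_eq_zero : PR (exch b) = 0

lemma basisRelations_one : BasisRelations (tx ∅ ∅) := by
  have hQ : Q1R (tx ∅ ∅) = 0 := by rw [Q1R_eq_xToT_one, xToT_succ_tx_empty]
  have hP : PR (tx ∅ ∅) = 0 := by rw [PR_eq_xToT_two, xToT_succ_tx_empty]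
  exact ⟨by rw [exch_tx], by simp [hQ, exch_tx, ZModModule.add_self], by simp [hQ], hP,
    by rw [exch_tx, hP]⟩

lemma BasisRelations.map_exch {b : R} (h : BasisRelations b) : BasisRelations (exch b) where
  Q1R_exch := by rw [exch_exch, h.Q1R_exch]
  Q1R_exch_Q1R := by rw [← h.Q1R_exch, h.Q1R_exch_Q1R, exch_exch, add_comm]
  PR_exch_Q1R := by rw [← h.Q1R_exch, h.PR_exch_Q1R]
  PR_eq_zero := h.PR_exch_eq_zero
  PR_exch_eq_zero := by rw [exch_exch, h.PR_eq_zero]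

lemma BasisRelations.mul_x_relations {b : R} (h : BasisRelations b) (k : ℕ+) :
    Q1R (exch (Q1R (b ⬝ 𝐱 k))) = Q1R (b ⬝ 𝐱 k) ∧
    PR (Q1R (b ⬝ 𝐱 k)) = 0 ∧ PR (exch (Q1R (b ⬝ 𝐱 k))) = 0 := by
  have hc : exch (Q1R (b ⬝ 𝐱 k)) = exch (Q1R b) ⬝ 𝐭 k + exch b ⬝ 𝐱 k := by
    rw [Q1R_mul_x, map_add, exch_mul_x, exch_mul_t]
  refine ⟨?_, ?_, ?_⟩
  · rw [hc, map_add, Q1R_mul_t, Q1R_mul_x, h.Q1R_exch_Q1R, ← h.Q1R_exch, Q1R_mul_x,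
      map_add, LinearMap.add_apply, add_comm (Q1R b ⬝ 𝐱 k), ZModModule.add_add_add_cancel, add_comm]
  · rw [Q1R_mul_x, map_add, PR_mul_x, PR_mul_t, PR_Q1R, Q1R_Q1R, h.PR_eq_zero]
    simp
  · rw [hc, map_add, PR_mul_t, PR_mul_x, h.PR_exch_Q1R, h.PR_exch_eq_zero, ← h.Q1R_exch]
    simp [ZModModule.add_self]

lemma basisRelations_mul_x {c : R} (hQ : Q1R c = 0) (he : Q1R (exch c) = c) (hP : PR c = 0)
    (hPe : PR (exch c) = 0) (m : ℕ+) : BasisRelations (c ⬝ 𝐱 m) := by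
  have hQc : Q1R (c ⬝ 𝐱 m) = c ⬝ 𝐭 m := by simp [Q1R_mul_x, hQ]
  refine ⟨?_, ?_, ?_, ?_, ?_⟩
  · rw [hQc, exch_mul_x, Q1R_mul_t, he]
  · rw [hQc, exch_mul_t, Q1R_mul_x, he, exch_mul_x]
  · rw [hQc, exch_mul_t, PR_mul_x, hPe, he]; simp
  · rw [PR_mul_x, hP, hQ]; simp
  · rw [exch_mul_x, PR_mul_t, hPe]; simp

lemma exch_mem_B2 {t : ℕ} {b : R} (hb : b ∈ B2 t) : exch b ∈ B2 t := by
  cases t with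
  | zero => rw [Set.mem_singleton_iff.1 hb, exch_tx]; rfl
  | succ t =>
    rcases hb with ⟨b, hb, rfl⟩ | ⟨b, hb, rfl⟩
    · exact Or.inr ⟨b, hb, (exch_mul_x _ _).symm⟩
    · exact Or.inl ⟨b, hb, by rw [tg, exch_mul_t, exch_exch]; rfl⟩

lemma basisRelations_of_mem_B2 {t : ℕ} {b : R} (hb : b ∈ B2 t) : BasisRelations b := by
  induction t generalizing b with
  | zero => rw [Set.mem_singleton_iff.1 hb]; exact basisRelations_one
  | succ t ih =>
    rcases hb with ⟨b, hb, rfl⟩ | ⟨b, hb, rfl⟩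
    all_goals
      obtain ⟨he, hP, hPe⟩ := (ih hb).mul_x_relations (2 * t + 1).toPNat'
      have hc := basisRelations_mul_x (Q1R_Q1R _) he hP hPe (2 * t + 2).toPNat'
    · exact hc
    · dsimp only [tg]
      rw [← exch_mul_x]
      exact hc.map_exch

/-- relations satisfied by the recursive basis, Lemma 4.3.
`B_{[2t]}` is closed under the exchange map, and each `b ∈ B_{[2t]}` satisfies the
identities (i)–(vii). -/
theorem B_relations (t : ℕ) :
    (∀ b ∈ B2 t, exch b ∈ B2 t) ∧
    ∀ b ∈ B2 t,
      Q1R b = Q1R (exch b) ∧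
      Q1R (exch (Q1R b)) = b + exch b ∧
      PR (exch (Q1R b)) = Q1R b ∧
      (PR b = 0 ∧ PR (exch b) = 0) ∧
      Q1R (exch (Q1R (mulR b (xg (2 * t + 1))))) = Q1R (mulR b (xg (2 * t + 1))) ∧
      PR (Q1R (mulR b (xg (2 * t + 1)))) = 0 ∧
      PR (exch (Q1R (mulR b (xg (2 * t + 1))))) = 0 := by
  refine ⟨fun b hb => exch_mem_B2 hb, fun b hb => ?_⟩
  have h := basisRelations_of_mem_B2 hb
  exact ⟨h.Q1R_exch, h.Q1R_exch_Q1R, h.PR_exch_Q1R, ⟨h.PR_eq_zero, h.PR_exch_eq_zero⟩,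
    h.mul_x_relations (2 * t + 1).toPNat'⟩

end Tmf

end
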